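/- arXiv:1508.01183 — 4 statements merged into one kernel-verified Lean document; each statement's English description precedes it below -/
import Mathlib

section
/- For q, q' > 0 and all n ≥ 3, ∑_{k=3}^{n} (q·k² - (6q - q')·k)·(n!/((n-k)!·2k)) ≤ ((q+q')/2)·e·n·n!, where e = ∑_{m=0}^∞ 1/m!. -/
open Finset

theorem sum_Icc_one_div_factorial_sub_le_exp_one (a n : ℕ) :
    ∑ k ∈ Icc a n, (1 : ℝ) / (n - k).factorial ≤ Real.exp 1 :=
  calc ∑ k ∈ Icc a n, (1 : ℝ) / (n - k).factorial
      ≤ ∑ k ∈ range (n + 1), (1 : ℝ) / (n - k).factorial :=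
        sum_le_sum_of_subset_of_nonneg
          (fun k hk => mem_range.2 (Nat.lt_succ_of_le (mem_Icc.1 hk).2))
          (fun _ _ _ => by positivity)
    _ = ∑ m ∈ range (n + 1), (1 : ℝ) / m.factorial :=
        sum_range_reflect (fun m => (1 : ℝ) / m.factorial) (n + 1)
    _ ≤ Real.exp 1 := by
        simpa using Real.sum_le_exp_of_nonneg zero_le_one (n + 1)

theorem quadratic_mul_div_le_mul_one_div_factorial {q q' : ℝ} (hq : 0 ≤ q) (hq' : 0 ≤ q')
    {n k : ℕ} (hk : 0 < k) (hkn : k ≤ n) :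
    (q * (k : ℝ) ^ 2 - (6 * q - q') * k) * ((n.factorial : ℝ) / ((n - k).factorial * (2 * k)))
      ≤ (q + q') / 2 * n * n.factorial * (1 / (n - k).factorial) := by
  have hk0 : (k : ℝ) ≠ 0 := by positivity
  have hkn' : (k : ℝ) ≤ n := by exact_mod_cast hkn
  have hn1 : (1 : ℝ) ≤ n := by exact_mod_cast hk.trans_le hkn
  have hlin : q * k - 6 * q + q' ≤ (q + q') * n := by nlinarith
  calc (q * (k : ℝ) ^ 2 - (6 * q - q') * k) * ((n.factorial : ℝ) / ((n - k).factorial * (2 * k)))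
      = (q * k - 6 * q + q') / 2 * (n.factorial / (n - k).factorial) := by
        field_simp
        ring
    _ ≤ (q + q') * n / 2 * (n.factorial / (n - k).factorial) := by gcongr
    _ = (q + q') / 2 * n * n.factorial * (1 / (n - k).factorial) := by ring

theorem stmt_8_general (q q' : ℝ) (hq : 0 < q) (hq' : 0 < q') (n : ℕ) :
    ∑ k ∈ Finset.Icc 3 n,
        (q * (k : ℝ) ^ 2 - (6 * q - q') * k) * ((n.factorial : ℝ) / ((n - k).factorial * (2 * k)))
      ≤ ((q + q') / 2) * Real.exp 1 * n * n.factorial :=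
  calc ∑ k ∈ Finset.Icc 3 n,
        (q * (k : ℝ) ^ 2 - (6 * q - q') * k) * ((n.factorial : ℝ) / ((n - k).factorial * (2 * k)))
      ≤ ∑ k ∈ Icc 3 n, (q + q') / 2 * n * n.factorial * (1 / (n - k).factorial : ℝ) :=
        sum_le_sum fun k hk => quadratic_mul_div_le_mul_one_div_factorial hq.le hq'.le
          (by linarith [(mem_Icc.1 hk).1]) (mem_Icc.1 hk).2
    _ = (q + q') / 2 * n * n.factorial * ∑ k ∈ Icc 3 n, (1 / (n - k).factorial : ℝ) :=
        (mul_sum ..).symm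
    _ ≤ (q + q') / 2 * n * n.factorial * Real.exp 1 := by
        gcongr
        exact sum_Icc_one_div_factorial_sub_le_exp_one 3 n
    _ = ((q + q') / 2) * Real.exp 1 * n * n.factorial := by ring

theorem stmt_8 (q q' : ℝ) (hq : 0 < q) (hq' : 0 < q') (n : ℕ) (hn : 3 ≤ n) :
    ∑ k ∈ Finset.Icc 3 n,
        (q * (k : ℝ) ^ 2 - (6 * q - q') * k) * ((n.factorial : ℝ) / ((n - k).factorial * (2 * k)))
      ≤ ((q + q') / 2) * Real.exp 1 * n * n.factorial :=
  stmt_8_general q q' hq hq' n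
end

section
/- For 0 < p < 1 and n ≥ 6, the sum S(n,p) = ∑_{i=6}^{n} p^i·(n!/(n-i)!)·(i-5) satisfies p^n·(n-5)·n! ≤ S(n,p) ≤ e^{1/p}·p^n·n·n!. -/
open Finset

/- With k = n - i, each weight p^i·n!/(n-i)! equals p^n·n!·p^{-k}/k!, so the weights sum to at
most e^{1/p}·p^n·n!, and the factor i - 5 is at most n. The lower bound is the term i = n. -/

lemma pow_mul_descFactorial_eq {p : ℝ} (hp : p ≠ 0) {n i : ℕ} (hi : i ≤ n) :
    p ^ i * (n.descFactorial i : ℝ) = p ^ n * n.factorial * (p⁻¹ ^ (n - i) / (n - i).factorial) := by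
  have hfac : ((n - i).factorial : ℝ) * n.descFactorial i = n.factorial := by
    exact_mod_cast Nat.factorial_mul_descFactorial hi
  have hpow : p ^ n = p ^ i * p ^ (n - i) := by rw [← pow_add, Nat.add_sub_cancel' hi]
  rw [← hfac, hpow, inv_pow]
  field_simp

lemma sum_pow_mul_descFactorial_le_exp {p : ℝ} (hp : 0 < p) (n : ℕ) :
    ∑ i ∈ range (n + 1), p ^ i * (n.descFactorial i : ℝ) ≤ Real.exp p⁻¹ * p ^ n * n.factorial := by
  calc ∑ i ∈ range (n + 1), p ^ i * (n.descFactorial i : ℝ)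
      = p ^ n * n.factorial * ∑ i ∈ range (n + 1), p⁻¹ ^ (n - i) / (n - i).factorial := by
        rw [mul_sum]
        exact sum_congr rfl fun i hi ↦
          pow_mul_descFactorial_eq hp.ne' (Nat.lt_succ_iff.mp (mem_range.mp hi))
    _ = p ^ n * n.factorial * ∑ k ∈ range (n + 1), p⁻¹ ^ k / k.factorial := by
        rw [← sum_range_reflect (fun k ↦ p⁻¹ ^ k / (k.factorial : ℝ)), add_tsub_cancel_right]
    _ ≤ p ^ n * n.factorial * Real.exp p⁻¹ := by
        gcongr
        exact Real.sum_le_exp_of_nonneg (by positivity) _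
    _ = Real.exp p⁻¹ * p ^ n * n.factorial := by ring

theorem stmt_9_general (p : ℝ) (hp0 : 0 < p) (n : ℕ) (hn : 6 ≤ n) :
    p ^ n * ((n : ℝ) - 5) * n.factorial
        ≤ ∑ i ∈ Finset.Icc 6 n, p ^ i * (n.descFactorial i : ℝ) * ((i : ℝ) - 5) ∧
      ∑ i ∈ Finset.Icc 6 n, p ^ i * (n.descFactorial i : ℝ) * ((i : ℝ) - 5)
        ≤ Real.exp (1 / p) * p ^ n * n * n.factorial := by
  have five_le {i : ℕ} (hi : i ∈ Icc 6 n) : (5 : ℝ) ≤ i := by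
    exact_mod_cast (by linarith [(mem_Icc.mp hi).1] : 5 ≤ i)
  have le_n {i : ℕ} (hi : i ∈ Icc 6 n) : (i : ℝ) ≤ n := by exact_mod_cast (mem_Icc.mp hi).2
  constructor
  · have hterm := single_le_sum (f := fun i ↦ p ^ i * (n.descFactorial i : ℝ) * ((i : ℝ) - 5))
      (fun i hi ↦ mul_nonneg (by positivity) (sub_nonneg.mpr (five_le hi)))
      (mem_Icc.mpr ⟨hn, le_rfl⟩)
    simpa only [Nat.descFactorial_self, mul_right_comm] using hterm
  · calc ∑ i ∈ Icc 6 n, p ^ i * (n.descFactorial i : ℝ) * ((i : ℝ) - 5)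
        ≤ ∑ i ∈ Icc 6 n, p ^ i * (n.descFactorial i : ℝ) * n := by
          gcongr with i hi
          linarith [le_n hi]
      _ ≤ ∑ i ∈ range (n + 1), p ^ i * (n.descFactorial i : ℝ) * n := by
          refine sum_le_sum_of_subset_of_nonneg (fun i hi ↦ ?_) (fun i _ _ ↦ by positivity)
          exact mem_range.mpr (Nat.lt_succ_of_le (mem_Icc.mp hi).2)
      _ ≤ Real.exp (1 / p) * p ^ n * n.factorial * n := by
          rw [← sum_mul, one_div]
          gcongr
          exact sum_pow_mul_descFactorial_le_exp hp0 n
      _ = Real.exp (1 / p) * p ^ n * n * n.factorial := by ring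

theorem stmt_9 (p : ℝ) (hp0 : 0 < p) (hp1 : p < 1) (n : ℕ) (hn : 6 ≤ n) :
    p ^ n * ((n : ℝ) - 5) * n.factorial
        ≤ ∑ i ∈ Finset.Icc 6 n, p ^ i * (n.descFactorial i : ℝ) * ((i : ℝ) - 5) ∧
      ∑ i ∈ Finset.Icc 6 n, p ^ i * (n.descFactorial i : ℝ) * ((i : ℝ) - 5)
        ≤ Real.exp (1 / p) * p ^ n * n * n.factorial :=
  stmt_9_general p hp0 n hn
end

section
/- For 0 < p < 1 and n ≥ 10, S(n,p) = ∑_{i=6}^{n} p^i·(n!/(n-i)!)·(i-5) satisfies (1/2)·p^n·n·n! ≤ S(n,p) ≤ e^{1/p}·p^n·n·n!; in particular S(n,p) = Θ(p^n·n·n!) as n → ∞ for fixed p. -/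
/-! The sum is dominated by its top term `p ^ n * n! * (n - 5)`, which is at least half of
`p ^ n * n * n!` once `n ≥ 10`. For the upper bound, replace the weight `i - 5` by `n` and
reindex by `k = n - i`: since `n! / (n - i)! = n! / k!`, the full sum `∑ p ^ i * n! / (n - i)!`
equals `p ^ n * n! * ∑_{k ≤ n} p⁻¹ ^ k / k!`, a partial sum of `exp (1 / p)`. -/

open Finset

theorem Nat.sum_range_pow_mul_descFactorial {K : Type*} [Field K] [CharZero K] {x : K}
    (hx : x ≠ 0) (n : ℕ) :
    ∑ i ∈ range (n + 1), x ^ i * (n.descFactorial i : K)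
      = x ^ n * n.factorial * ∑ k ∈ range (n + 1), x⁻¹ ^ k / k.factorial := by
  rw [← sum_range_reflect, mul_sum]
  refine sum_congr rfl fun k hk => ?_
  have hkn : k ≤ n := Nat.lt_succ_iff.mp (mem_range.mp hk)
  rw [show n + 1 - 1 - k = n - k by omega]
  have hfac : (k.factorial : K) * n.descFactorial (n - k) = n.factorial := by
    have := Nat.factorial_mul_descFactorial (Nat.sub_le n k)
    rw [Nat.sub_sub_self hkn] at this
    exact_mod_cast this
  have hpow : x ^ n = x ^ (n - k) * x ^ k := by rw [← pow_add, Nat.sub_add_cancel hkn]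
  have hk0 : (k.factorial : K) ≠ 0 := Nat.cast_ne_zero.mpr k.factorial_ne_zero
  rw [← hfac, hpow, inv_pow]
  field_simp

theorem Real.sum_range_pow_mul_descFactorial_le {p : ℝ} (hp : 0 < p) (n : ℕ) :
    ∑ i ∈ range (n + 1), p ^ i * (n.descFactorial i : ℝ)
      ≤ Real.exp (1 / p) * p ^ n * n.factorial := by
  rw [Nat.sum_range_pow_mul_descFactorial hp.ne', one_div,
    mul_comm (Real.exp _) (p ^ n), mul_right_comm _ (Real.exp _)]
  exact mul_le_mul_of_nonneg_left (Real.sum_le_exp_of_nonneg (inv_nonneg.mpr hp.le) (n + 1))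
    (by positivity)

section WeightedSum

variable {p : ℝ} (hp : 0 < p) {n : ℕ}
include hp

theorem half_mul_le_sum_Icc_pow_mul_descFactorial (hn : 10 ≤ n) :
    (1 / 2) * p ^ n * n * n.factorial
      ≤ ∑ i ∈ Icc 6 n, p ^ i * (n.descFactorial i : ℝ) * ((i : ℝ) - 5) := by
  have hnonneg : ∀ i ∈ Icc 6 n, 0 ≤ p ^ i * (n.descFactorial i : ℝ) * ((i : ℝ) - 5) := by
    intro i hi
    have : (5 : ℝ) ≤ i := by exact_mod_cast (by grind : 5 ≤ i)
    have : 0 ≤ (i : ℝ) - 5 := by linarith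
    positivity
  have hn' : (n : ℝ) / 2 ≤ n - 5 := by
    have : (10 : ℝ) ≤ n := by exact_mod_cast hn
    linarith
  calc (1 / 2) * p ^ n * n * n.factorial = p ^ n * n.factorial * (n / 2) := by ring
    _ ≤ p ^ n * n.factorial * (n - 5) := by gcongr
    _ = p ^ n * (n.descFactorial n : ℝ) * ((n : ℝ) - 5) := by rw [Nat.descFactorial_self]
    _ ≤ _ := single_le_sum hnonneg (mem_Icc.mpr ⟨by omega, le_rfl⟩)

theorem sum_Icc_pow_mul_descFactorial_le_exp :
    ∑ i ∈ Icc 6 n, p ^ i * (n.descFactorial i : ℝ) * ((i : ℝ) - 5)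
      ≤ Real.exp (1 / p) * p ^ n * n * n.factorial := by
  calc ∑ i ∈ Icc 6 n, p ^ i * (n.descFactorial i : ℝ) * ((i : ℝ) - 5)
      ≤ ∑ i ∈ Icc 6 n, p ^ i * (n.descFactorial i : ℝ) * n := by
        gcongr with i hi
        have : (i : ℝ) ≤ n := by exact_mod_cast (mem_Icc.mp hi).2
        linarith
    _ ≤ ∑ i ∈ range (n + 1), p ^ i * (n.descFactorial i : ℝ) * n := by
        refine sum_le_sum_of_subset_of_nonneg (fun i hi => ?_) fun i _ _ => by positivity
        simp only [mem_Icc, mem_range] at hi ⊢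
        omega
    _ = (∑ i ∈ range (n + 1), p ^ i * (n.descFactorial i : ℝ)) * n := by rw [sum_mul]
    _ ≤ Real.exp (1 / p) * p ^ n * n.factorial * n := by
        gcongr
        exact Real.sum_range_pow_mul_descFactorial_le hp n
    _ = Real.exp (1 / p) * p ^ n * n * n.factorial := by ring

end WeightedSum

theorem stmt_10_general (p : ℝ) (hp0 : 0 < p) (n : ℕ) (hn : 10 ≤ n) :
    (1 / 2) * p ^ n * n * n.factorial
        ≤ ∑ i ∈ Finset.Icc 6 n, p ^ i * (n.descFactorial i : ℝ) * ((i : ℝ) - 5) ∧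
      ∑ i ∈ Finset.Icc 6 n, p ^ i * (n.descFactorial i : ℝ) * ((i : ℝ) - 5)
        ≤ Real.exp (1 / p) * p ^ n * n * n.factorial :=
  ⟨half_mul_le_sum_Icc_pow_mul_descFactorial hp0 hn, sum_Icc_pow_mul_descFactorial_le_exp hp0⟩

theorem stmt_10 (p : ℝ) (hp0 : 0 < p) (hp1 : p < 1) (n : ℕ) (hn : 10 ≤ n) :
    (1 / 2) * p ^ n * n * n.factorial
        ≤ ∑ i ∈ Finset.Icc 6 n, p ^ i * (n.descFactorial i : ℝ) * ((i : ℝ) - 5) ∧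
      ∑ i ∈ Finset.Icc 6 n, p ^ i * (n.descFactorial i : ℝ) * ((i : ℝ) - 5)
        ≤ Real.exp (1 / p) * p ^ n * n * n.factorial :=
  stmt_10_general p hp0 n hn
end

section
/- Let q > 0 and n ≥ 3. Then E := (q/16)·∑_{k=3}^{n-3} ∑_{l=3}^{n-k} n!/(n-k-l)! satisfies E = (q/16)·∑_{i=6}^{n} (n!/(n-i)!)·(i-5), and hence (q/16)·(n-5)·n! ≤ E ≤ (q·e/16)·n·n! for n ≥ 6. -/
/-!
Grouping the pairs `(k, l)` by `i = k + l`, each `i ∈ [6, n]` arises from exactly `i - 5` pairs,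
which gives the identity. The term `i = n` alone contributes `(n - 5) n!`; for the upper bound,
`i - 5 ≤ n` and `∑_{i ≤ n} n!/(n - i)! = n! ∑_{m ≤ n} 1/m! ≤ e n!`.
-/

open Finset Nat

theorem sum_Icc_sum_Icc_add_eq_sum_nsmul {M : Type*} [AddCommMonoid M] (f : ℕ → M) (a n : ℕ) :
    ∑ k ∈ Icc a (n - a), ∑ l ∈ Icc a (n - k), f (k + l)
      = ∑ i ∈ Icc (2 * a) n, (i + 1 - 2 * a) • f i := by
  have shift : ∀ k ∈ Icc a (n - a),
      ∑ l ∈ Icc a (n - k), f (k + l) = ∑ i ∈ Icc (k + a) n, f i := by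
    intro k hk
    have hkn : k + (n - k) = n := by grind
    conv_rhs => rw [← hkn, ← map_add_left_Icc, sum_map]
    rfl
  rw [sum_congr rfl shift,
    sum_comm' (t' := Icc (2 * a) n) (s' := fun i ↦ Icc a (i - a)) (by grind)]
  refine sum_congr rfl fun i _ ↦ ?_
  rw [sum_const, Nat.card_Icc]
  congr 1
  omega

theorem sum_Icc_sum_Icc_descFactorial_add (n : ℕ) :
    ∑ k ∈ Icc 3 (n - 3), ∑ l ∈ Icc 3 (n - k), (n.descFactorial (k + l) : ℝ)
      = ∑ i ∈ Icc 6 n, (n.descFactorial i : ℝ) * ((i : ℝ) - 5) := by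
  rw [sum_Icc_sum_Icc_add_eq_sum_nsmul (fun i ↦ (n.descFactorial i : ℝ)) 3 n]
  refine sum_congr rfl fun i hi ↦ ?_
  have h5 : 5 ≤ i := by grind
  rw [nsmul_eq_mul, mul_comm, show i + 1 - 2 * 3 = i - 5 by omega, Nat.cast_sub h5]
  norm_num

theorem sum_descFactorial_le_factorial_mul_exp_one (n : ℕ) :
    ∑ i ∈ range (n + 1), (n.descFactorial i : ℝ) ≤ n ! * Real.exp 1 := by
  have reflect : ∑ i ∈ range (n + 1), (n.descFactorial i : ℝ)
      = n ! * ∑ m ∈ range (n + 1), 1 / (m ! : ℝ) := by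
    rw [← sum_range_reflect, mul_sum]
    refine sum_congr rfl fun m hm ↦ ?_
    have hmn : m ≤ n := by grind
    have h := Nat.factorial_mul_descFactorial (Nat.sub_le n m)
    rw [Nat.sub_sub_self hmn] at h
    rw [mul_one_div, eq_div_iff (by positivity), show n + 1 - 1 - m = n - m by omega]
    exact_mod_cast (mul_comm _ _).trans h
  have hexp := Real.sum_le_exp_of_nonneg zero_le_one (n + 1)
  simp only [one_pow] at hexp
  rw [reflect]
  gcongr

theorem sub_five_mul_factorial_le_sum_descFactorial {n : ℕ} (hn : 6 ≤ n) :
    ((n : ℝ) - 5) * n ! ≤ ∑ i ∈ Icc 6 n, (n.descFactorial i : ℝ) * ((i : ℝ) - 5) := by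
  have hlast := single_le_sum (f := fun i ↦ (n.descFactorial i : ℝ) * ((i : ℝ) - 5))
    (fun i hi ↦ by
      have : (6 : ℝ) ≤ i := by exact_mod_cast (mem_Icc.1 hi).1
      exact mul_nonneg (by positivity) (by linarith))
    (right_mem_Icc.2 hn)
  simpa [Nat.descFactorial_self, mul_comm] using hlast

theorem sum_descFactorial_le_mul_factorial_mul_exp_one (n : ℕ) :
    ∑ i ∈ Icc 6 n, (n.descFactorial i : ℝ) * ((i : ℝ) - 5) ≤ n * n ! * Real.exp 1 := by
  calc ∑ i ∈ Icc 6 n, (n.descFactorial i : ℝ) * ((i : ℝ) - 5)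
      ≤ ∑ i ∈ Icc 6 n, (n : ℝ) * n.descFactorial i := by
        refine sum_le_sum fun i hi ↦ ?_
        have : (i : ℝ) ≤ n := by exact_mod_cast (mem_Icc.1 hi).2
        nlinarith [show (0 : ℝ) ≤ n.descFactorial i by positivity]
    _ ≤ ∑ i ∈ range (n + 1), (n : ℝ) * n.descFactorial i := by
        refine sum_le_sum_of_subset_of_nonneg (fun i hi ↦ ?_) (fun _ _ _ ↦ by positivity)
        grind
    _ ≤ n * (n ! * Real.exp 1) := by
        rw [← mul_sum]
        gcongr
        exact sum_descFactorial_le_factorial_mul_exp_one n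
    _ = n * n ! * Real.exp 1 := by ring

theorem stmt_18_general (q : ℝ) (hq : 0 < q) (n : ℕ) :
    (q / 16) * ∑ k ∈ Finset.Icc 3 (n - 3), ∑ l ∈ Finset.Icc 3 (n - k),
        (n.descFactorial (k + l) : ℝ)
      = (q / 16) * ∑ i ∈ Finset.Icc 6 n, (n.descFactorial i : ℝ) * ((i : ℝ) - 5) ∧
    (6 ≤ n →
      (q / 16) * ((n : ℝ) - 5) * n.factorial
          ≤ (q / 16) * ∑ k ∈ Finset.Icc 3 (n - 3), ∑ l ∈ Finset.Icc 3 (n - k),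
              (n.descFactorial (k + l) : ℝ) ∧
        (q / 16) * ∑ k ∈ Finset.Icc 3 (n - 3), ∑ l ∈ Finset.Icc 3 (n - k),
            (n.descFactorial (k + l) : ℝ)
          ≤ (q * Real.exp 1 / 16) * n * n.factorial) := by
  rw [sum_Icc_sum_Icc_descFactorial_add]
  refine ⟨rfl, fun hn ↦ ⟨?_, ?_⟩⟩
  · rw [mul_assoc]
    gcongr
    exact sub_five_mul_factorial_le_sum_descFactorial hn
  · calc q / 16 * ∑ i ∈ Icc 6 n, (n.descFactorial i : ℝ) * ((i : ℝ) - 5)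
        ≤ q / 16 * (n * n ! * Real.exp 1) := by
          gcongr
          exact sum_descFactorial_le_mul_factorial_mul_exp_one n
      _ = q * Real.exp 1 / 16 * n * n ! := by ring

theorem stmt_18 (q : ℝ) (hq : 0 < q) (n : ℕ) (hn : 3 ≤ n) :
    (q / 16) * ∑ k ∈ Finset.Icc 3 (n - 3), ∑ l ∈ Finset.Icc 3 (n - k),
        (n.descFactorial (k + l) : ℝ)
      = (q / 16) * ∑ i ∈ Finset.Icc 6 n, (n.descFactorial i : ℝ) * ((i : ℝ) - 5) ∧
    (6 ≤ n →
      (q / 16) * ((n : ℝ) - 5) * n.factorial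
          ≤ (q / 16) * ∑ k ∈ Finset.Icc 3 (n - 3), ∑ l ∈ Finset.Icc 3 (n - k),
              (n.descFactorial (k + l) : ℝ) ∧
        (q / 16) * ∑ k ∈ Finset.Icc 3 (n - 3), ∑ l ∈ Finset.Icc 3 (n - k),
            (n.descFactorial (k + l) : ℝ)
          ≤ (q * Real.exp 1 / 16) * n * n.factorial) :=
  stmt_18_general q hq n
end
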